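/- arXiv:2005.01664 — 2 statements merged into one kernel-verified Lean document; each statement's English description precedes it below -/
import Mathlib

section
/- Let G = C_m ⋊_{(r)} C_{4n} be the metacyclic group with presentation ⟨u, v | u^m = v^{4n} = 1, v u v^{-1} = u^r⟩ where m is odd, gcd(m, 4n) = 1 and r^{4n} ≡ 1 (mod m). Then G admits a surjective homomorphism onto the quaternion group Q_{4a} (a > 1 odd) if and only if a divides m and r ≡ -1 (mod a). -/
/-!
Every element of `G` is some `u ^ s * v ^ t`, and since `⟨u⟩ ∩ ⟨v⟩ = 1` (the orders are
coprime) the exponents are determined modulo the orders of `u` and `v`. Hence `u ↦ x`, `v ↦ y`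
extends to a homomorphism as soon as `x` and `y` satisfy the defining relations. For `Q_{4a}`
take `x = a 2`, of order `a`, and `y = xa 0`; for odd `a` they generate.

Conversely, a surjection sends `u`, whose order is odd, to some `a i`, and `v` to some `xa j`.
Writing `a 1` as an image `a i ^ s * xa j ^ t` forces `t` to be even, so `a 2 ∈ ⟨a i⟩` and
`a ∣ orderOf (a i) ∣ m`; and conjugation by `xa j` inverts `a i`, so `r ≡ -1` modulo
`orderOf (a i)`.
-/

open Subgroup

section Metacyclic

variable {G : Type*} [Group G] {u v : G} {r : ℕ}

theorem pow_mul_pow_eq_of_conj_eq_pow (h : v * u * v⁻¹ = u ^ r) (s t : ℕ) :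
    v ^ t * u ^ s = u ^ (s * r ^ t) * v ^ t := by
  have hv : SemiconjBy v u (u ^ r) := mul_inv_eq_iff_eq_mul.mp h
  induction t generalizing s with
  | zero => simp
  | succ t ih =>
    rw [pow_succ', mul_assoc, ih, ← mul_assoc, (hv.pow_right _).eq, ← pow_mul, mul_assoc,
      pow_succ]
    congr 2
    ring

theorem pow_mul_pow_mul_pow_mul_pow_of_conj_eq_pow (h : v * u * v⁻¹ = u ^ r) (s t s' t' : ℕ) :
    u ^ s * v ^ t * (u ^ s' * v ^ t') = u ^ (s + s' * r ^ t) * v ^ (t + t') := by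
  rw [mul_assoc, ← mul_assoc (v ^ t), pow_mul_pow_eq_of_conj_eq_pow h, pow_add, pow_add]
  group

theorem exists_eq_pow_mul_pow (hrel : v * u * v⁻¹ = u ^ r) (hgen : closure {u, v} = ⊤)
    (hu : IsOfFinOrder u) (hv : IsOfFinOrder v) (g : G) : ∃ s t : ℕ, g = u ^ s * v ^ t := by
  have hg : g ∈ Submonoid.closure {u, v} := by
    rw [← closure_toSubmonoid_of_isOfFinOrder (by simp [hu, hv]), hgen]
    trivial
  induction hg using Submonoid.closure_induction with
  | mem x hx =>
    rcases hx with rfl | rfl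
    exacts [⟨1, 0, by simp⟩, ⟨0, 1, by simp⟩]
  | one => exact ⟨0, 0, by simp⟩
  | mul x y _ _ hx hy =>
    obtain ⟨s, t, rfl⟩ := hx
    obtain ⟨s', t', rfl⟩ := hy
    exact ⟨_, _, pow_mul_pow_mul_pow_mul_pow_of_conj_eq_pow hrel s t s' t'⟩

theorem pow_eq_pow_and_pow_eq_pow_of_pow_mul_pow_eq (hcop : (orderOf u).Coprime (orderOf v))
    {s t s' t' : ℕ} (h : u ^ s * v ^ t = u ^ s' * v ^ t') :
    u ^ s = u ^ s' ∧ v ^ t = v ^ t' := by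
  have hdisj : Disjoint (zpowers u) (zpowers v) :=
    disjoint_of_coprime_natCard (by rwa [Nat.card_zpowers, Nat.card_zpowers])
  have hw : (u ^ s')⁻¹ * u ^ s = v ^ t' * (v ^ t)⁻¹ := by
    rw [inv_mul_eq_iff_eq_mul, ← mul_assoc, eq_mul_inv_iff_mul_eq, h]
  have hw1 : (u ^ s')⁻¹ * u ^ s = 1 := disjoint_def.mp hdisj
    (mul_mem (inv_mem (pow_mem (mem_zpowers u) _)) (pow_mem (mem_zpowers u) _))
    (hw ▸ mul_mem (pow_mem (mem_zpowers v) _) (inv_mem (pow_mem (mem_zpowers v) _)))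
  exact ⟨(inv_mul_eq_one.mp hw1).symm, (mul_inv_eq_one.mp (hw ▸ hw1)).symm⟩

theorem exists_monoidHom_eq_of_conj_eq_pow {H : Type*} [Group H] (hrel : v * u * v⁻¹ = u ^ r)
    (hgen : closure {u, v} = ⊤) (hcop : (orderOf u).Coprime (orderOf v))
    (hu : IsOfFinOrder u) (hv : IsOfFinOrder v) {x y : H} (hxy : y * x * y⁻¹ = x ^ r)
    (hx : x ^ orderOf u = 1) (hy : y ^ orderOf v = 1) : ∃ f : G →* H, f u = x ∧ f v = y := by
  choose S T hST using exists_eq_pow_mul_pow hrel hgen hu hv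
  have hwd : ∀ g s t, g = u ^ s * v ^ t → x ^ S g * y ^ T g = x ^ s * y ^ t := by
    intro g s t hg
    obtain ⟨hs, ht⟩ := pow_eq_pow_and_pow_eq_pow_of_pow_mul_pow_eq hcop ((hST g).symm.trans hg)
    rw [pow_eq_pow_iff_modEq] at hs ht
    rw [pow_eq_pow_iff_modEq.mpr (hs.of_dvd (orderOf_dvd_of_pow_eq_one hx)),
      pow_eq_pow_iff_modEq.mpr (ht.of_dvd (orderOf_dvd_of_pow_eq_one hy))]
  refine ⟨MonoidHom.mk' (fun g ↦ x ^ S g * y ^ T g) fun g h ↦ ?_, ?_, ?_⟩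
  · rw [hwd (g * h) _ _ (by rw [hST g, hST h, pow_mul_pow_mul_pow_mul_pow_of_conj_eq_pow hrel]),
      pow_mul_pow_mul_pow_mul_pow_of_conj_eq_pow hxy]
  · simpa using hwd u 1 0 (by simp)
  · simpa using hwd v 0 1 (by simp)

theorem MonoidHom.range_eq_closure_pair {H : Type*} [Group H] (f : G →* H)
    (hgen : closure {u, v} = ⊤) : f.range = closure {f u, f v} := by
  rw [MonoidHom.range_eq_map, ← hgen, MonoidHom.map_closure, Set.image_pair]

theorem pow_eq_inv_iff_natCast_eq_neg_one {x : G} {r : ℕ} :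
    x ^ r = x⁻¹ ↔ (r : ZMod (orderOf x)) = -1 := by
  rw [← zpow_natCast, ← zpow_neg_one, zpow_eq_zpow_iff_modEq, ← ZMod.intCast_eq_intCast_iff]
  simp

end Metacyclic

namespace QuaternionGroup

variable {n : ℕ}

theorem a_pow (i : ZMod (2 * n)) (k : ℕ) : a i ^ k = a ((k : ZMod (2 * n)) * i) := by
  induction k with
  | zero => simp
  | succ k ih => rw [pow_succ, ih, a_mul_a, Nat.cast_succ, add_one_mul]

theorem commute_a (i j : ZMod (2 * n)) : Commute (a i) (a j) := by
  rw [Commute, SemiconjBy, a_mul_a, a_mul_a, add_comm]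

theorem xa_mul_a_mul_inv (i j : ZMod (2 * n)) : xa j * a i * (xa j)⁻¹ = (a i)⁻¹ := by
  rw [mul_inv_eq_iff_eq_mul, eq_inv_mul_iff_mul_eq, xa_mul_a, a_mul_xa,
    add_sub_cancel_right]

theorem orderOf_a_two : orderOf (a 2 : QuaternionGroup n) = n := by
  have h := orderOf_pow_of_dvd (x := (a 1 : QuaternionGroup n)) two_ne_zero
    (by rw [orderOf_a_one]; exact dvd_mul_right 2 n)
  rwa [orderOf_a_one, a_one_pow, Nat.mul_div_cancel_left _ two_pos] at h

theorem closure_a_two_xa_zero (hn : Odd n) :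
    closure {a 2, xa 0} = (⊤ : Subgroup (QuaternionGroup n)) := by
  obtain ⟨k, rfl⟩ := hn
  have ha1 : a 1 ∈ closure {(a 2 : QuaternionGroup (2 * k + 1)), xa 0} := by
    have h : a 1 = (a 2 : QuaternionGroup (2 * k + 1)) ^ (k + 1) * (xa 0 ^ 2)⁻¹ := by
      rw [xa_sq, a_pow, eq_mul_inv_iff_mul_eq, a_mul_a]
      push_cast
      congr 1
      ring
    rw [h]
    exact mul_mem (pow_mem (subset_closure (by simp)) _)
      (inv_mem (pow_mem (subset_closure (by simp)) _))
  rw [eq_top_iff]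
  rintro (z | z) -
  · rw [← ZMod.natCast_zmod_val z, ← a_one_pow]
    exact pow_mem ha1 _
  · rw [← zero_add z, ← xa_mul_a, ← ZMod.natCast_zmod_val z, ← a_one_pow]
    exact mul_mem (subset_closure (by simp)) (pow_mem ha1 _)

theorem exists_eq_a_of_odd_orderOf [NeZero n] {x : QuaternionGroup n} (hx : Odd (orderOf x)) :
    ∃ i, x = a i := by
  cases x with
  | a i => exact ⟨i, rfl⟩
  | xa i => rw [orderOf_xa] at hx; exact absurd hx (by decide)

theorem a_two_eq_pow_of_a_one_eq {i j : ZMod (2 * n)} {s t : ℕ} (h : a 1 = a i ^ s * xa j ^ t) :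
    a 2 = a i ^ (2 * s) := by
  obtain ⟨q, rfl | rfl⟩ := Nat.even_or_odd' t
  · have hcomm : Commute (a i ^ s) (xa j ^ (2 * q)) := by
      rw [pow_mul, xa_sq]
      exact (commute_a i n).pow_pow s q
    rw [show (a 2 : QuaternionGroup n) = a 1 ^ 2 by rw [a_one_pow]; rfl, h, hcomm.mul_pow,
      ← pow_mul, ← pow_mul, show 2 * q * 2 = 4 * q by ring, pow_mul (xa j) 4, xa_pow_four,
      one_pow, mul_one, mul_comm]
  · rw [pow_succ, pow_mul, xa_sq, a_pow, a_pow, ← mul_assoc, a_mul_a, a_mul_xa] at h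
    cases h

theorem dvd_orderOf_and_natCast_eq_neg_one_of_closure_eq_top [NeZero n] {x y : QuaternionGroup n}
    {r : ℕ} (hx : Odd (orderOf x)) (hxy : y * x * y⁻¹ = x ^ r) (hgen : closure {x, y} = ⊤) :
    n ∣ orderOf x ∧ (r : ZMod n) = -1 := by
  obtain ⟨i, rfl⟩ := exists_eq_a_of_odd_orderOf hx
  have hdec := exists_eq_pow_mul_pow hxy hgen (isOfFinOrder_of_finite _) (isOfFinOrder_of_finite _)
  obtain ⟨j, rfl⟩ : ∃ j, y = xa j := by
    cases y with
    | xa j => exact ⟨j, rfl⟩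
    | a j =>
      obtain ⟨s, t, h⟩ := hdec (xa 0)
      rw [a_pow, a_pow, a_mul_a] at h
      cases h
  obtain ⟨s, t, h⟩ := hdec (a 1)
  have hn : n ∣ orderOf (a i) := by
    have h2 := orderOf_dvd_of_mem_zpowers (a_two_eq_pow_of_a_one_eq h ▸ pow_mem (mem_zpowers _) _)
    rwa [orderOf_a_two] at h2
  rw [xa_mul_a_mul_inv, eq_comm, pow_eq_inv_iff_natCast_eq_neg_one] at hxy
  have hr := congrArg (ZMod.castHom hn (ZMod n)) hxy
  rw [map_natCast, map_neg, map_one] at hr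
  exact ⟨hn, hr⟩

end QuaternionGroup

theorem stmt2_general (G : Type*) [Group G] (m n r : ℕ) (hn : 1 ≤ n)
    (hm : Odd m) (hcop : Nat.Coprime m (4 * n))
    (u v : G) (hu : orderOf u = m) (hv : orderOf v = 4 * n)
    (hrel : v * u * v⁻¹ = u ^ r)
    (hgen : Subgroup.closure {u, v} = ⊤)
    (a : ℕ) (hao : Odd a) :
    (∃ f : G →* QuaternionGroup a, Function.Surjective f) ↔
      (a ∣ m ∧ (r : ZMod a) = -1) := by
  have : NeZero a := ⟨hao.pos.ne'⟩
  constructor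
  · rintro ⟨f, hf⟩
    have hfu : orderOf (f u) ∣ m := hu ▸ orderOf_map_dvd f u
    obtain ⟨hdvd, hr⟩ := QuaternionGroup.dvd_orderOf_and_natCast_eq_neg_one_of_closure_eq_top
      (hm.of_dvd_nat hfu) (by simpa using congrArg f hrel)
      (by rw [← f.range_eq_closure_pair hgen, MonoidHom.range_eq_top.mpr hf])
    exact ⟨hdvd.trans hfu, hr⟩
  · rintro ⟨hdvd, hr⟩
    obtain ⟨f, hfu, hfv⟩ := exists_monoidHom_eq_of_conj_eq_pow hrel hgen (hu ▸ hv ▸ hcop)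
      (orderOf_pos_iff.mp (hu ▸ hm.pos)) (orderOf_pos_iff.mp (by omega))
      (x := QuaternionGroup.a 2) (y := QuaternionGroup.xa 0)
      (by rw [QuaternionGroup.xa_mul_a_mul_inv, eq_comm, pow_eq_inv_iff_natCast_eq_neg_one,
        QuaternionGroup.orderOf_a_two, hr])
      (by rw [hu, ← orderOf_dvd_iff_pow_eq_one, QuaternionGroup.orderOf_a_two]; exact hdvd)
      (by rw [hv, pow_mul, QuaternionGroup.xa_pow_four, one_pow])
    refine ⟨f, MonoidHom.range_eq_top.mp ?_⟩
    rw [f.range_eq_closure_pair hgen, hfu, hfv, QuaternionGroup.closure_a_two_xa_zero hao]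

/-- Let `G = C_m ⋊_{(r)} C_{4n}` (presented by generators `u, v` with
`u^m = v^{4n} = 1`, `v u v⁻¹ = u^r`, of order `4nm`).  Then `G` surjects onto the
generalised quaternion group `Q_{4a}` (for `a > 1` odd) iff `a ∣ m` and
`r ≡ -1 (mod a)`. -/
theorem stmt2 (G : Type*) [Group G] (m n r : ℕ) (hn : 1 ≤ n)
    (hm : Odd m) (hcop : Nat.Coprime m (4 * n)) (hr : r ^ (4 * n) ≡ 1 [MOD m])
    (u v : G) (hu : orderOf u = m) (hv : orderOf v = 4 * n)
    (hrel : v * u * v⁻¹ = u ^ r)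
    (hgen : Subgroup.closure {u, v} = ⊤)
    (hcard : Nat.card G = m * (4 * n))
    (a : ℕ) (ha : 1 < a) (hao : Odd a) :
    (∃ f : G →* QuaternionGroup a, Function.Surjective f) ↔
      (a ∣ m ∧ (r : ZMod a) = -1) :=
  stmt2_general G m n r hn hm hcop u v hu hv hrel hgen a hao
end

section
/- For m ≥ 1 odd, the semidirect product C_m ⋊_{(a,b)} Q_8 is isomorphic to Q_{8m} if and only if (a,b) ≡ (1,-1), (-1,1) or (-1,-1) (mod m). -/
open QuaternionGroup

lemma powModHelper {G : Type*} [Group G] {c : G} {N : ℕ} (hc : c ^ N = 1) (k : ℕ) :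
    c ^ (k % N) = c ^ k := by
  conv_rhs => rw [← Nat.div_add_mod k N, pow_add, pow_mul, hc, one_pow, one_mul]

lemma conjxa {n : ℕ} (j i : ZMod (2 * n)) :
    (xa j : QuaternionGroup n) * a i * (xa j)⁻¹ = a (-i) := by
  have hswap : (xa j : QuaternionGroup n) * a i = a (-i) * xa j := by
    rw [xa_mul_a, a_mul_xa, sub_neg_eq_add]
  rw [hswap, mul_assoc, mul_inv_cancel, mul_one]



lemma quatAux {G : Type*} [Group G] (m : ℕ) (hm : Odd m) (hm1 : 1 ≤ m) (u t d : G)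
    (hu : orderOf u = m) (ht4 : t ^ 4 = 1) (hut : Commute u t)
    (hd2 : d ^ 2 = t ^ 2)
    (hdu : d * u * d⁻¹ = u⁻¹) (hdt : d * t * d⁻¹ = t⁻¹)
    (hgen : Subgroup.closure {u, t, d} = ⊤)
    (hcard : Nat.card G = 8 * m) :
    Nonempty (G ≃* QuaternionGroup (2 * m)) := by
  obtain ⟨k, hk⟩ := hm
  have hN : NeZero (2 * (2 * m)) := ⟨by omega⟩
  have hN1 : Fact (1 < 2 * (2 * m)) := ⟨by omega⟩
  set c : G := u * t with hc_def
  have hum : u ^ m = 1 := by rw [← hu]; exact pow_orderOf_eq_one u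
  have hcr : ∀ r : ℕ, c ^ r = u ^ r * t ^ r := fun r => hut.mul_pow r
  have hcN : c ^ (2 * (2 * m)) = 1 := by
    rw [hcr]
    have h1 : u ^ (2 * (2 * m)) = 1 := by
      rw [show 2 * (2 * m) = m * 4 by ring, pow_mul, hum, one_pow]
    have h2 : t ^ (2 * (2 * m)) = 1 := by
      rw [show 2 * (2 * m) = 4 * m by ring, pow_mul, ht4, one_pow]
    rw [h1, h2, one_mul]
  set φ : ZMod (2 * (2 * m)) → G := fun i => c ^ i.val with hφ_def
  have φadd : ∀ i j, φ (i + j) = φ i * φ j := by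
    intro i j
    simp only [hφ_def, ZMod.val_add, powModHelper hcN, pow_add]
  have φzero : φ 0 = 1 := by simp [hφ_def]
  have φneg : ∀ i, φ (-i) = (φ i)⁻¹ := by
    intro i
    have := φadd i (-i)
    rw [add_neg_cancel, φzero] at this
    exact eq_inv_of_mul_eq_one_right this.symm
  have φcomm : ∀ i j, φ i * φ j = φ j * φ i := by
    intro i j; simp only [hφ_def]; exact (Commute.pow_pow_self c _ _)
  have hdc : d * c * d⁻¹ = c⁻¹ := by
    rw [hc_def, mul_inv_rev, ← hut.inv_inv]
    calc d * (u * t) * d⁻¹ = (d * u * d⁻¹) * (d * t * d⁻¹) := by group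
    _ = u⁻¹ * t⁻¹ := by rw [hdu, hdt]
  have hdφ : ∀ j, d * φ j = φ (-j) * d := by
    intro j
    have h := conj_pow (i := (j : ZMod (2*(2*m))).val) (a := d) (b := c)
    rw [hdc, inv_pow] at h
    rw [φneg]
    simp only [hφ_def]
    rw [h]; group
  have hφ2m : φ ((2 * m : ℕ) : ZMod (2 * (2 * m))) = d ^ 2 := by
    have hv : ((2 * m : ℕ) : ZMod (2 * (2 * m))).val = 2 * m :=
      ZMod.val_cast_of_lt (by omega)
    simp only [hφ_def, hv]
    rw [hcr, show 2 * m = m * 2 by ring, pow_mul, hum, one_pow, one_mul,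
      show m * 2 = 4 * k + 2 by omega, pow_add, pow_mul, ht4, one_pow, one_mul, hd2]
  set Ff : QuaternionGroup (2 * m) → G := fun q =>
    match q with
    | .a i => φ i
    | .xa i => φ (-i) * d
    with hFf_def
  have hmul : ∀ p q, Ff (p * q) = Ff p * Ff q := by
    rintro (i | i) (j | j)
    · show φ (i + j) = φ i * φ j
      exact φadd i j
    · show φ (-(j - i)) * d = φ i * (φ (-j) * d)
      rw [show -(j-i) = i + -j by ring, φadd, mul_assoc]
    · show φ (-(i + j)) * d = (φ (-i) * d) * φ j
      calc φ (-(i + j)) * d = φ (-i + -j) * d := by rw [show -i + -j = -(i+j) by ring]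
        _ = φ (-i) * (φ (-j) * d) := by rw [φadd, mul_assoc]
        _ = (φ (-i) * d) * φ j := by rw [← hdφ j, mul_assoc]
    · show φ (((2 * m : ℕ) : ZMod (2 * (2 * m))) + j - i) = (φ (-i) * d) * (φ (-j) * d)
      calc φ (((2 * m : ℕ) : ZMod (2 * (2 * m))) + j - i)
          = φ (-i) * (φ j * φ ((2 * m : ℕ) : ZMod (2 * (2 * m)))) := by
            rw [← φadd, ← φadd]; congr 1; ring
        _ = φ (-i) * (φ j * d ^ 2) := by rw [hφ2m]
        _ = (φ (-i) * d) * (φ (-j) * d) := by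
            rw [mul_assoc (φ (-i)), ← mul_assoc d, hdφ (-j), neg_neg, sq]; group
  set F : QuaternionGroup (2 * m) →* G := MonoidHom.mk' Ff hmul with hF_def
  have hmemc : c ∈ F.range := by
    refine ⟨QuaternionGroup.a 1, ?_⟩
    show φ 1 = c
    simp only [hφ_def, ZMod.val_one, pow_one]
  have hmemd : d ∈ F.range := by
    refine ⟨QuaternionGroup.xa 0, ?_⟩
    show φ (-0) * d = d
    rw [neg_zero, φzero, one_mul]
  have hmemt : t ∈ F.range := by
    have hct : c ^ (m * m) = t := by
      have h1 : u ^ (m * m) = 1 := by rw [pow_mul, hum, one_pow]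
      have h2 : t ^ (m * m) = t := by
        rw [show m * m = 4 * (k * k + k) + 1 by subst hk; ring, pow_succ, pow_mul, ht4,
          one_pow, one_mul]
      rw [hcr, h1, h2, one_mul]
    exact hct ▸ pow_mem hmemc (m * m)
  have hmemu : u ∈ F.range := by
    have : u = c * t⁻¹ := by rw [hc_def, mul_inv_cancel_right]
    rw [this]; exact mul_mem hmemc (inv_mem hmemt)
  have hrange : F.range = ⊤ := by
    rw [eq_top_iff, ← hgen]
    refine (Subgroup.closure_le _).mpr ?_
    rintro z hz
    simp only [Set.mem_insert_iff, Set.mem_singleton_iff] at hz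
    rcases hz with rfl | rfl | rfl
    exacts [hmemu, hmemt, hmemd]
  have hsurj : Function.Surjective F := by
    rw [← MonoidHom.range_eq_top]; exact hrange
  have hfin : Finite G := Nat.finite_of_card_ne_zero (by omega)
  have hNZ : NeZero (2 * m) := ⟨by omega⟩
  have hcards : Nat.card (QuaternionGroup (2 * m)) = Nat.card G := by
    rw [hcard, Nat.card_eq_fintype_card, QuaternionGroup.card]
    ring
  have hbij : Function.Bijective F :=
    (Nat.bijective_iff_surjective_and_card F).mpr ⟨hsurj, hcards⟩
  exact ⟨(MulEquiv.ofBijective F hbij).symm⟩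

/-- For `m ≥ 1` odd, the semidirect product `C_m ⋊_{(a,b)} Q_8` is isomorphic to
`Q_{8m}` iff `(a,b) ≡ (1,-1)`, `(-1,1)` or `(-1,-1)` (mod `m`). -/
theorem stmt4 (G : Type*) [Group G] (m : ℕ) (hm : Odd m) (hm1 : 1 ≤ m)
    (a b : ℤ)
    (ha : ((a : ZMod m)) ^ 2 = 1) (hb : ((b : ZMod m)) ^ 2 = 1)
    (u x y : G) (hu : orderOf u = m)
    (hxy1 : x ^ 2 = y ^ 2) (hxy2 : y * x * y⁻¹ = x⁻¹)
    (hQ : Nat.card (Subgroup.closure {x, y}) = 8)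
    (hx : x * u * x⁻¹ = u ^ a) (hy : y * u * y⁻¹ = u ^ b)
    (hgen : Subgroup.closure {u, x, y} = ⊤)
    (hcard : Nat.card G = 8 * m) :
    Nonempty (G ≃* QuaternionGroup (2 * m)) ↔
      (((a : ZMod m) = 1 ∧ (b : ZMod m) = -1) ∨
        ((a : ZMod m) = -1 ∧ (b : ZMod m) = 1) ∨
        ((a : ZMod m) = -1 ∧ (b : ZMod m) = -1)) := by
  -- basic Q8 facts
  have hx4 : x ^ 4 = 1 := by
    have h1 : y * x ^ 2 * y⁻¹ = (y * x * y⁻¹) ^ 2 := by simp [pow_succ, mul_assoc]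
    have h2 : y * x ^ 2 * y⁻¹ = x ^ 2 := by rw [hxy1]; group
    rw [hxy2] at h1
    have h3 : x ^ 2 = x⁻¹ ^ 2 := h2 ▸ h1
    calc x ^ 4 = x ^ 2 * x ^ 2 := by rw [← pow_add]
      _ = x⁻¹ ^ 2 * x ^ 2 := by nth_rewrite 1 [h3]; rfl
      _ = 1 := by group
  have hy4 : y ^ 4 = 1 := by
    calc y ^ 4 = (y ^ 2) ^ 2 := by rw [← pow_mul]
      _ = (x ^ 2) ^ 2 := by rw [hxy1]
      _ = x ^ 4 := by rw [← pow_mul]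
      _ = 1 := hx4
  have hyx : y * x = x⁻¹ * y := by
    calc y * x = (y * x * y⁻¹) * y := by group
      _ = x⁻¹ * y := by rw [hxy2]
  have h5 : x * (y * x) = y := by rw [hyx]; group
  have hyxinv : y * x⁻¹ = x * y := by
    calc y * x⁻¹ = (x * (y * x)) * x⁻¹ := by rw [h5]
      _ = x * y := by group
  have hxyx : x * y * x⁻¹ = y⁻¹ := by
    calc x * y * x⁻¹ = x * (y * x⁻¹) := by rw [mul_assoc]
      _ = x * (x * y) := by rw [hyxinv]
      _ = x ^ 2 * y := by rw [← mul_assoc, ← sq]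
      _ = y ^ 2 * y := by rw [hxy1]
      _ = y ^ 3 := by rw [← pow_succ]
      _ = y⁻¹ := eq_inv_of_mul_eq_one_right (by rw [← pow_succ']; exact hy4)
  have hxy2sq : (x * y) ^ 2 = x ^ 2 := by
    calc (x * y) ^ 2 = x * (y * x) * y := by rw [sq]; simp [mul_assoc]
      _ = x * (x⁻¹ * y) * y := by rw [hyx]
      _ = y * y := by rw [mul_inv_cancel_left]
      _ = y ^ 2 := (sq y).symm
      _ = x ^ 2 := hxy1.symm
  -- power conversion
  have upow : ∀ r s : ℤ, (r : ZMod m) = (s : ZMod m) → u ^ r = u ^ s := by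
    intro r s h
    rw [zpow_eq_zpow_iff_modEq, hu]
    exact (ZMod.intCast_eq_intCast_iff r s m).mp h
  have upow_iff : ∀ r s : ℤ, u ^ r = u ^ s ↔ (r : ZMod m) = (s : ZMod m) := by
    intro r s
    rw [zpow_eq_zpow_iff_modEq, hu, ZMod.intCast_eq_intCast_iff]
  constructor
  · rintro ⟨e⟩
    rcases eq_or_lt_of_le hm1 with hm1' | hm2
    · -- m = 1 : everything trivial
      left
      constructor <;> · rw [← hm1']; exact Subsingleton.elim _ _
    have hm3 : 3 ≤ m := by
      rcases hm with ⟨k, hk⟩; omega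
    have hNZ : NeZero (2 * m) := ⟨by omega⟩
    have hvord : orderOf (e u) = m := by rw [e.orderOf_eq]; exact hu
    obtain ⟨i, hi⟩ : ∃ i, e u = QuaternionGroup.a i := by
      rcases he : e u with i | i
      · exact ⟨i, rfl⟩
      · exfalso
        rw [he, orderOf_xa] at hvord
        rcases hm with ⟨k, hk⟩; omega
    have key : ∀ (g : G) (r : ℤ), g * u * g⁻¹ = u ^ r →
        (r : ZMod m) = 1 ∨ (r : ZMod m) = -1 := by
      intro g r hg
      have he' : e g * e u * (e g)⁻¹ = (e u) ^ r := by
        rw [← map_inv, ← map_mul, ← map_mul, hg, map_zpow]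
      rcases heg : e g with j | j
      · left
        rw [heg, hi] at he'
        have hcomm : (QuaternionGroup.a j : QuaternionGroup (2 * m)) * QuaternionGroup.a i
            = QuaternionGroup.a i * QuaternionGroup.a j := by
          rw [a_mul_a, a_mul_a, add_comm]
        have h3 : (QuaternionGroup.a i : QuaternionGroup (2 * m)) ^ r = QuaternionGroup.a i := by
          rw [← he', hcomm, mul_assoc, mul_inv_cancel, mul_one]
        have h4 : u ^ r = u := e.injective (by rw [map_zpow, hi, h3])
        have h6 : (r : ZMod m) = ((1 : ℤ) : ZMod m) :=
          (upow_iff r 1).mp (by rw [zpow_one]; exact h4)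
        rw [h6, Int.cast_one]
      · right
        rw [heg, hi] at he'
        have hainv : (QuaternionGroup.a (-i) : QuaternionGroup (2 * m))
            = (QuaternionGroup.a i)⁻¹ := by
          apply eq_inv_of_mul_eq_one_right
          rw [a_mul_a, add_neg_cancel]
          exact one_def.symm
        have h3 : (QuaternionGroup.a i : QuaternionGroup (2 * m)) ^ r
            = (QuaternionGroup.a i)⁻¹ := by
          rw [← he', conjxa, hainv]
        have h4 : u ^ r = u⁻¹ := e.injective (by rw [map_zpow, map_inv, hi, h3])
        have h6 : (r : ZMod m) = ((-1 : ℤ) : ZMod m) :=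
          (upow_iff r (-1)).mp (by rw [zpow_neg_one]; exact h4)
        rw [h6]; push_cast; ring
    have hne : ¬((a : ZMod m) = 1 ∧ (b : ZMod m) = 1) := by
      rintro ⟨ha1, hb1⟩
      have hux : x * u * x⁻¹ = u := by
        rw [hx]
        exact (upow a 1 (by rw [Int.cast_one]; exact ha1)).trans (zpow_one u)
      have huy : y * u * y⁻¹ = u := by
        rw [hy]
        exact (upow b 1 (by rw [Int.cast_one]; exact hb1)).trans (zpow_one u)
      have hucomm : ∀ g : G, u * g = g * u := by
        have hle : (⊤ : Subgroup G) ≤ Subgroup.centralizer {u} := by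
          rw [← hgen]
          refine (Subgroup.closure_le _).mpr ?_
          rintro z hz
          simp only [Set.mem_insert_iff, Set.mem_singleton_iff] at hz
          rw [SetLike.mem_coe, Subgroup.mem_centralizer_iff]
          intro h hh
          rw [Set.mem_singleton_iff] at hh
          rw [hh]
          rcases hz with rfl | rfl | rfl
          · rfl
          · calc u * z = (z * u * z⁻¹) * z := by rw [hux]
              _ = z * u := by group
          · calc u * z = (z * u * z⁻¹) * z := by rw [huy]
              _ = z * u := by group
        intro g
        exact Subgroup.mem_centralizer_iff.mp (hle (Subgroup.mem_top g)) u rfl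
      have hqcomm : ∀ q : QuaternionGroup (2 * m), e u * q = q * e u := by
        intro q
        calc e u * q = e u * e (e.symm q) := by rw [e.apply_symm_apply]
          _ = e (u * e.symm q) := by rw [map_mul]
          _ = e (e.symm q * u) := by rw [hucomm]
          _ = q * e u := by rw [map_mul, e.apply_symm_apply]
      have hconj : QuaternionGroup.xa 0 * e u * (QuaternionGroup.xa 0)⁻¹ = e u := by
        rw [← hqcomm]; group
      rw [hi, conjxa] at hconj
      have hii : -i = i := by injection hconj
      have hsum : i + i = 0 := by nth_rewrite 1 [← hii]; rw [neg_add_cancel]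
      have hsq : (e u) ^ 2 = 1 := by
        rw [hi, sq, a_mul_a, hsum]
        exact one_def.symm
      have hdvd : m ∣ 2 := by
        rw [← hvord]; exact orderOf_dvd_of_pow_eq_one hsq
      have := Nat.le_of_dvd (by norm_num) hdvd
      omega
    rcases key x a hx with ha1 | ha1 <;> rcases key y b hy with hb1 | hb1 <;> tauto
  · -- backward direction
    rintro (⟨ha1, hb1⟩ | ⟨ha1, hb1⟩ | ⟨ha1, hb1⟩)
    · -- a ≡ 1, b ≡ -1 : t := x, d := y
      have hux : x * u * x⁻¹ = u := by
        rw [hx]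
        exact (upow a 1 (by rw [Int.cast_one]; exact ha1)).trans (zpow_one u)
      have huy : y * u * y⁻¹ = u⁻¹ := by
        rw [hy]
        exact (upow b (-1) (by rw [hb1]; push_cast; ring)).trans (zpow_neg_one u)
      have hut : Commute u x := by
        have : x * u = u * x := by
          calc x * u = (x * u * x⁻¹) * x := by group
            _ = u * x := by rw [hux]
        exact this.symm
      exact quatAux m hm hm1 u x y hu hx4 hut hxy1.symm huy hxy2 hgen hcard
    · -- a ≡ -1, b ≡ 1 : t := y, d := x
      have hux : x * u * x⁻¹ = u⁻¹ := by
        rw [hx]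
        exact (upow a (-1) (by rw [ha1]; push_cast; ring)).trans (zpow_neg_one u)
      have huy : y * u * y⁻¹ = u := by
        rw [hy]
        exact (upow b 1 (by rw [Int.cast_one]; exact hb1)).trans (zpow_one u)
      have hut : Commute u y := by
        have : y * u = u * y := by
          calc y * u = (y * u * y⁻¹) * y := by group
            _ = u * y := by rw [huy]
        exact this.symm
      have hgen' : Subgroup.closure {u, y, x} = ⊤ := by
        rw [show ({u, y, x} : Set G) = {u, x, y} from by ext g; simp; tauto]
        exact hgen
      exact quatAux m hm hm1 u y x hu hy4 hut hxy1 hux hxyx hgen' hcard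
    · -- a ≡ -1, b ≡ -1 : t := x * y, d := x
      have hux : x * u * x⁻¹ = u⁻¹ := by
        rw [hx]
        exact (upow a (-1) (by rw [ha1]; push_cast; ring)).trans (zpow_neg_one u)
      have huy : y * u * y⁻¹ = u⁻¹ := by
        rw [hy]
        exact (upow b (-1) (by rw [hb1]; push_cast; ring)).trans (zpow_neg_one u)
      have ht4 : (x * y) ^ 4 = 1 := by
        calc (x * y) ^ 4 = ((x * y) ^ 2) ^ 2 := by rw [← pow_mul]
          _ = (x ^ 2) ^ 2 := by rw [hxy2sq]
          _ = x ^ 4 := by rw [← pow_mul]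
          _ = 1 := hx4
      have hut : Commute u (x * y) := by
        have h1 : (x * y) * u * (x * y)⁻¹ = x * (y * u * y⁻¹) * x⁻¹ := by group
        have h2 : (x * y) * u * (x * y)⁻¹ = u := by
          rw [h1, huy]
          have : x * u⁻¹ * x⁻¹ = (x * u * x⁻¹)⁻¹ := by group
          rw [this, hux, inv_inv]
        have : (x * y) * u = u * (x * y) := by
          calc (x * y) * u = ((x * y) * u * (x * y)⁻¹) * (x * y) := by group
            _ = u * (x * y) := by rw [h2]
        exact this.symm
      have hdt : x * (x * y) * x⁻¹ = (x * y)⁻¹ := by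
        have h1 : x * (x * y) * x⁻¹ = x * (x * y * x⁻¹) := by group
        rw [h1, hxyx]
        have h2 : y⁻¹ * x⁻¹ = y⁻¹ * (y * x * y⁻¹) := by rw [hxy2]
        calc x * y⁻¹ = y⁻¹ * (y * x * y⁻¹) := by group
          _ = y⁻¹ * x⁻¹ := by rw [hxy2]
          _ = (x * y)⁻¹ := by group
      have hgen' : Subgroup.closure {u, x * y, x} = ⊤ := by
        rw [eq_top_iff, ← hgen]
        refine (Subgroup.closure_le _).mpr ?_
        rintro z hz
        simp only [Set.mem_insert_iff, Set.mem_singleton_iff] at hz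
        have hxmem : x ∈ Subgroup.closure ({u, x * y, x} : Set G) :=
          Subgroup.subset_closure (by simp)
        have hxymem : x * y ∈ Subgroup.closure ({u, x * y, x} : Set G) :=
          Subgroup.subset_closure (by simp)
        rcases hz with rfl | rfl | rfl
        · exact Subgroup.subset_closure (by simp)
        · exact hxmem
        · have hyy : x⁻¹ * (x * z) ∈ Subgroup.closure ({u, x * z, x} : Set G) :=
            mul_mem (inv_mem hxmem) hxymem
          rwa [inv_mul_cancel_left] at hyy
      exact quatAux m hm hm1 u (x * y) x hu ht4 hut hxy2sq.symm hux hdt hgen' hcard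
end
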